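/- Let f_{λ,ε}(X) = min over z with z_{Ω_j} ∈ R_ε(y^{(j)}) for all j of [λ‖X‖_* + (1/2)‖z − P_Ω(X)‖₂²]. Then for all γ > 0 and all X, f_{λ,γε}(X) = γ² f_{γ⁻¹λ, ε}(X/γ). Consequently, X minimizes f_{λ,γε} if and only if X/γ minimizes f_{γ⁻¹λ,ε}. -/

import Mathlib

/-!
Rescaling the retargeted scores by `γ` maps the `ε`-margin isotonic constraints onto the
`γε`-margin ones, and since the nuclear norm is positively homogeneous the loss is jointly
`2`-homogeneous: `λ‖X‖_* + ½‖γz − P_Ω X‖² = γ² ((γ⁻¹λ)‖γ⁻¹X‖_* + ½‖z − P_Ω(γ⁻¹X)‖²)`.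
Taking infima over the constraint sets gives the identity, and the minimizer statement follows
because `X ↦ γ⁻¹X` is a bijection and multiplying by `γ² > 0` preserves order.
-/

open scoped BigOperators
open scoped Pointwise Matrix

/-- The nuclear norm (sum of singular values) of a real matrix. -/
noncomputable def nuclearNorm {d₁ d₂ : ℕ} (X : Matrix (Fin d₁) (Fin d₂) ℝ) : ℝ :=
  ∑ i, Real.sqrt ((Matrix.isHermitian_conjTranspose_mul_self X).eigenvalues i)

/-- The objective `f_{λ,ε}(X)`: the infimum over retargeted scores `z` respecting
the ε-margin ranking constraints (within each column, as recorded by the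
observed index list `Ω` and scores `y`) of
`λ‖X‖_* + (1/2)‖z − P_Ω(X)‖₂²`. -/
noncomputable def retargetedObjective {d₁ d₂ m : ℕ}
    (Ω : Fin m → Fin d₁ × Fin d₂) (y : Fin m → ℝ) (lam ε : ℝ)
    (X : Matrix (Fin d₁) (Fin d₂) ℝ) : ℝ :=
  sInf {v : ℝ | ∃ z : Fin m → ℝ,
    (∀ s t : Fin m, (Ω s).2 = (Ω t).2 → y s < y t → z s ≤ z t - ε) ∧
    v = lam * nuclearNorm X + (1 / 2) * ∑ s, (z s - X (Ω s).1 (Ω s).2) ^ 2}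

namespace Matrix.IsHermitian

variable {𝕜 n : Type*} [RCLike 𝕜] [Fintype n] [DecidableEq n] {A : Matrix n n 𝕜}

open Polynomial in
lemma charpoly_smul (hA : A.IsHermitian) (c : ℝ) :
    (c • A).charpoly = ∏ i, (X - C ((c * hA.eigenvalues i : ℝ) : 𝕜)) := by
  conv_lhs => rw [hA.spectral_theorem, Unitary.conjStarAlgAut_apply, ← Matrix.smul_mul,
    ← Matrix.mul_smul, Matrix.charpoly_mul_comm, ← mul_assoc, ← Matrix.diagonal_smul]
  rw [Unitary.coe_star_mul_self, one_mul, Matrix.charpoly_diagonal]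
  simp only [Pi.smul_apply, Function.comp_apply, RCLike.real_smul_eq_coe_mul, RCLike.ofReal_mul]

lemma map_eigenvalues_smul (hA : A.IsHermitian) {c : ℝ} {B : Matrix n n 𝕜}
    (hB : B.IsHermitian) (hBA : B = c • A) :
    Finset.univ.val.map hB.eigenvalues = Finset.univ.val.map (fun i ↦ c * hA.eigenvalues i) := by
  subst hBA
  apply Multiset.map_injective (RCLike.ofReal_injective (K := 𝕜))
  rw [Multiset.map_map, ← hB.roots_charpoly_eq_eigenvalues, hA.charpoly_smul,
    Polynomial.roots_prod _ _ (Finset.prod_ne_zero_iff.mpr fun i _ ↦ Polynomial.X_sub_C_ne_zero _)]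
  simp only [Polynomial.roots_X_sub_C, Multiset.bind_singleton, Multiset.map_map]
  rfl

lemma sum_comp_eigenvalues_smul {M : Type*} [AddCommMonoid M] (f : ℝ → M)
    (hA : A.IsHermitian) {c : ℝ} {B : Matrix n n 𝕜} (hB : B.IsHermitian) (hBA : B = c • A) :
    ∑ i, f (hB.eigenvalues i) = ∑ i, f (c * hA.eigenvalues i) := by
  simpa only [Multiset.map_map, Function.comp_def, Finset.sum_map_val] using
    congrArg (fun s ↦ (s.map f).sum) (hA.map_eigenvalues_smul hB hBA)

end Matrix.IsHermitian

lemma nuclearNorm_smul {d₁ d₂ : ℕ} (X : Matrix (Fin d₁) (Fin d₂) ℝ) {c : ℝ} (hc : 0 ≤ c) :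
    nuclearNorm (c • X) = c * nuclearNorm X := by
  have hgram : (c • X)ᴴ * (c • X) = c ^ 2 • (Xᴴ * X) := by
    rw [Matrix.conjTranspose_smul, Matrix.smul_mul, Matrix.mul_smul, smul_smul, star_trivial, sq]
  rw [nuclearNorm, nuclearNorm, Finset.mul_sum,
    (Matrix.isHermitian_conjTranspose_mul_self X).sum_comp_eigenvalues_smul Real.sqrt _ hgram]
  refine Finset.sum_congr rfl fun i _ ↦ ?_
  rw [Real.sqrt_mul (sq_nonneg c), Real.sqrt_sq hc]

/-- The paper's `R_ε(y)` imposed separately on each group `col⁻¹ {j}` (the columns `Ω_j`). -/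
def marginIsotonicSet {ι κ : Type*} (col : ι → κ) (y : ι → ℝ) (ε : ℝ) : Set (ι → ℝ) :=
  {z | ∀ s t, col s = col t → y s < y t → z s ≤ z t - ε}

lemma smul_marginIsotonicSet {ι κ : Type*} (col : ι → κ) (y : ι → ℝ) (ε : ℝ) {γ : ℝ}
    (hγ : 0 < γ) : γ • marginIsotonicSet col y ε = marginIsotonicSet col y (γ * ε) := by
  ext z
  have scale (a b : ℝ) : γ⁻¹ * a ≤ γ⁻¹ * b - ε ↔ a ≤ b - γ * ε := by
    rw [show γ⁻¹ * b - ε = γ⁻¹ * (b - γ * ε) by field_simp, mul_le_mul_iff_right₀ (inv_pos.mpr hγ)]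
  simp only [Set.mem_smul_set_iff_inv_smul_mem₀ hγ.ne', marginIsotonicSet, Set.mem_ofPred_eq,
    Pi.smul_apply, smul_eq_mul, scale]

noncomputable def retargetedLoss {d₁ d₂ m : ℕ} (Ω : Fin m → Fin d₁ × Fin d₂) (lam : ℝ)
    (X : Matrix (Fin d₁) (Fin d₂) ℝ) (z : Fin m → ℝ) : ℝ :=
  lam * nuclearNorm X + (1 / 2) * ∑ s, (z s - X (Ω s).1 (Ω s).2) ^ 2

section

variable {d₁ d₂ m : ℕ} (Ω : Fin m → Fin d₁ × Fin d₂)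

lemma retargetedObjective_eq_sInf_image (y : Fin m → ℝ) (lam ε : ℝ)
    (X : Matrix (Fin d₁) (Fin d₂) ℝ) :
    retargetedObjective Ω y lam ε X =
      sInf (retargetedLoss Ω lam X '' marginIsotonicSet (fun s ↦ (Ω s).2) y ε) := by
  simp only [retargetedObjective, retargetedLoss, Set.image, marginIsotonicSet, Set.mem_ofPred_eq,
    eq_comm]

lemma retargetedLoss_smul (lam : ℝ) (X : Matrix (Fin d₁) (Fin d₂) ℝ) (z : Fin m → ℝ) {γ : ℝ}
    (hγ : 0 < γ) :
    retargetedLoss Ω lam X (γ • z) = γ ^ 2 * retargetedLoss Ω (γ⁻¹ * lam) (γ⁻¹ • X) z := by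
  have hsq (s : Fin m) : (γ * z s - X (Ω s).1 (Ω s).2) ^ 2
      = γ ^ 2 * (z s - γ⁻¹ * X (Ω s).1 (Ω s).2) ^ 2 := by
    field_simp
  simp only [retargetedLoss, nuclearNorm_smul X (inv_nonneg.mpr hγ.le), Pi.smul_apply,
    Matrix.smul_apply, smul_eq_mul, hsq, ← Finset.mul_sum]
  field_simp

lemma retargetedObjective_smul (y : Fin m → ℝ) (lam ε : ℝ) (X : Matrix (Fin d₁) (Fin d₂) ℝ)
    {γ : ℝ} (hγ : 0 < γ) :
    retargetedObjective Ω y lam (γ * ε) X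
      = γ ^ 2 * retargetedObjective Ω y (γ⁻¹ * lam) ε (γ⁻¹ • X) := by
  rw [retargetedObjective_eq_sInf_image, retargetedObjective_eq_sInf_image,
    ← smul_marginIsotonicSet _ _ _ hγ, ← Set.image_smul, Set.image_image]
  simp only [retargetedLoss_smul Ω _ _ _ hγ]
  rw [← Set.image_image (γ ^ 2 * ·), ← smul_eq_mul (γ ^ 2), ← Real.sInf_smul_of_nonneg (sq_nonneg γ)]
  rfl

end

lemma forall_le_iff_of_eq_mul_comp {α β : Type*} {f : α → ℝ} {g : β → ℝ} {φ : α → β}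
    (hφ : Function.Surjective φ) {c : ℝ} (hc : 0 < c) (hfg : ∀ x, f x = c * g (φ x)) (x : α) :
    (∀ x', f x ≤ f x') ↔ ∀ y, g (φ x) ≤ g y := by
  simp only [hfg, mul_le_mul_iff_right₀ hc, hφ.forall]

theorem retargeted_objective_scaling_general {d₁ d₂ m : ℕ}
    (Ω : Fin m → Fin d₁ × Fin d₂) (y : Fin m → ℝ) (lam ε : ℝ)
    (γ : ℝ) (hγ : 0 < γ) :
    (∀ X : Matrix (Fin d₁) (Fin d₂) ℝ,
        retargetedObjective Ω y lam (γ * ε) X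
          = γ ^ 2 * retargetedObjective Ω y (γ⁻¹ * lam) ε (γ⁻¹ • X)) ∧
    ∀ X : Matrix (Fin d₁) (Fin d₂) ℝ,
      (∀ X', retargetedObjective Ω y lam (γ * ε) X
          ≤ retargetedObjective Ω y lam (γ * ε) X') ↔
        (∀ X', retargetedObjective Ω y (γ⁻¹ * lam) ε (γ⁻¹ • X)
          ≤ retargetedObjective Ω y (γ⁻¹ * lam) ε X') := by
  have scaling := fun X ↦ retargetedObjective_smul Ω y lam ε X hγ
  have inv_smul_surjective : Function.Surjective (γ⁻¹ • · : Matrix (Fin d₁) (Fin d₂) ℝ → _) :=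
    fun X ↦ ⟨γ • X, inv_smul_smul₀ hγ.ne' X⟩
  exact ⟨scaling, forall_le_iff_of_eq_mul_comp inv_smul_surjective (pow_pos hγ 2) scaling⟩

/-- Proposition 1 of the paper: `f_{λ,γε}(X) = γ² f_{γ⁻¹λ,ε}(X/γ)`,
hence `X` minimizes `f_{λ,γε}` iff `X/γ` minimizes `f_{γ⁻¹λ,ε}`. -/
theorem retargeted_objective_scaling {d₁ d₂ m : ℕ}
    (Ω : Fin m → Fin d₁ × Fin d₂) (y : Fin m → ℝ) (lam ε : ℝ)
    (hlam : 0 < lam) (hε : 0 < ε) (γ : ℝ) (hγ : 0 < γ) :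
    (∀ X : Matrix (Fin d₁) (Fin d₂) ℝ,
        retargetedObjective Ω y lam (γ * ε) X
          = γ ^ 2 * retargetedObjective Ω y (γ⁻¹ * lam) ε (γ⁻¹ • X)) ∧
    ∀ X : Matrix (Fin d₁) (Fin d₂) ℝ,
      (∀ X', retargetedObjective Ω y lam (γ * ε) X
          ≤ retargetedObjective Ω y lam (γ * ε) X') ↔
        (∀ X', retargetedObjective Ω y (γ⁻¹ * lam) ε (γ⁻¹ • X)
          ≤ retargetedObjective Ω y (γ⁻¹ * lam) ε X') :=
  retargeted_objective_scaling_general Ω y lam ε γ hγ
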